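/- Let K be a field of characteristic zero and let f be a K-algebra endomorphism of K[x,y] with Jac(P,Q) a nonzero element of K, where P = f(x), Q = f(y). If P is symmetric with respect to the exchange involution α (α(P) = P) and Q is skew-symmetric with respect to α (α(Q) = −Q), then f is a K-algebra automorphism of K[x,y]. -/

import Mathlib

open MvPolynomial

/-- The Jacobian of two polynomials in `K[x,y]` (variables indexed by `Fin 2`). -/
noncomputable def Jac {K : Type*} [CommRing K]
    (P Q : MvPolynomial (Fin 2) K) : MvPolynomial (Fin 2) K :=
  pderiv 0 P * pderiv 1 Q - pderiv 1 P * pderiv 0 Q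

/-- The exchange involution `α` on `K[x,y]`, swapping the two variables. -/
noncomputable def exch (K : Type*) [CommSemiring K] :
    MvPolynomial (Fin 2) K ≃ₐ[K] MvPolynomial (Fin 2) K :=
  MvPolynomial.renameEquiv K (Equiv.swap 0 1)

/-- An involution on a `K`-algebra: an algebra automorphism of order 2. -/
def IsInvolution {K R : Type*} [CommSemiring K] [Semiring R] [Algebra K R]
    (γ : R ≃ₐ[K] R) : Prop :=
  (∀ p, γ (γ p) = p) ∧ γ ≠ AlgEquiv.refl

/-!
After the substitution `x ↦ u + v`, `y ↦ u - v` the exchange involution becomes `v ↦ -v`, so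
`P` is even and `Q` is odd in `v`. Restricting `Jac P Q = c` to `v = 0` gives
`P(u, 0) = λ u + const` and `∂Q/∂v (u, 0) = ε` with `λ ε = c ≠ 0`.

The rest is a Newton polygon argument with integer weights `w`. If `P` has `w`-degree at most
`w(u)`, an induction on the `v`-degree shows that `Q` has `w`-degree at most `w(v)`. Then the
product of the extreme monomials of the two leading forms cannot cancel in `Jac P Q`, so their
exponents have vanishing determinant or they are `u` and `v`. For a monomial `u^a v^b` of `P`
with `a, b ≥ 1` and steepest slope `(a - 1) / b`, the weight `(b, 1 - a)` makes the determinant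
positive; hence `P = λ u + r(v)`. The weight `(1, 0)` then forces `Q = ε v`, and
`(λ u + r(v), ε v)` is a triangular automorphism.
-/

open Finset.HasAntidiagonal
open Finsupp (single single_eq_same single_le_iff weight weight_eq_sum weight_single)

namespace SymmetricKeller

variable {K : Type*}

-- `Jac (u^a v^b) (u^c v^d) = (a d - b c) u^(a+c-1) v^(b+d-1)`
def expDet (m n : Fin 2 →₀ ℕ) : ℤ := m 0 * n 1 - m 1 * n 0

theorem weight_fin_two (w : Fin 2 → ℤ) (m : Fin 2 →₀ ℕ) :
    weight w m = m 0 * w 0 + m 1 * w 1 := by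
  simp [weight_eq_sum, Fin.sum_univ_two]

theorem exists_add_single_add_single_eq_of_expDet_ne_zero {m₁ m₂ : Fin 2 →₀ ℕ}
    (h : expDet m₁ m₂ ≠ 0) : ∃ M, M + single 0 1 + single 1 1 = m₁ + m₂ := by
  have h0 : 1 ≤ m₁ 0 + m₂ 0 := Nat.one_le_iff_ne_zero.2 fun h0 =>
    h (by simp [expDet, show m₁ 0 = 0 by omega, show m₂ 0 = 0 by omega])
  have h1 : 1 ≤ m₁ 1 + m₂ 1 := Nat.one_le_iff_ne_zero.2 fun h1 =>
    h (by simp [expDet, show m₁ 1 = 0 by omega, show m₂ 1 = 0 by omega])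
  exact ⟨m₁ + m₂ - single 0 1 - single 1 1, Finsupp.ext (Fin.forall_fin_two.2
    ⟨by simpa using Nat.sub_add_cancel h0, by simpa using Nat.sub_add_cancel h1⟩)⟩

section CommRing

variable [CommRing K]

theorem coeff_X_mul_pderiv (i : Fin 2) (p : MvPolynomial (Fin 2) K) (n : Fin 2 →₀ ℕ) :
    coeff n (X i * pderiv i p) = n i * coeff n p := by
  rw [coeff_X_mul']
  split_ifs with h
  · have hn : 1 ≤ n i := Nat.one_le_iff_ne_zero.2 (Finsupp.mem_support_iff.1 h)
    rw [coeff_pderiv, tsub_add_cancel_of_le (single_le_iff.2 hn), Finsupp.tsub_apply,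
      single_eq_same, Nat.cast_sub hn]
    push_cast; ring
  · rw [Finsupp.notMem_support_iff.1 h]; simp

theorem coeff_jac (P Q : MvPolynomial (Fin 2) K) (M : Fin 2 →₀ ℕ) :
    coeff M (Jac P Q) = ∑ x ∈ antidiagonal (M + single 0 1 + single 1 1),
      (expDet x.1 x.2 : K) * coeff x.1 P * coeff x.2 Q := by
  -- multiplied by `X 0 * X 1`, each `pderiv i` becomes the Euler operator `X i * pderiv i`,
  -- which is diagonal on monomials
  have euler : Jac P Q * X 0 * X 1 = (X 0 * pderiv 0 P) * (X 1 * pderiv 1 Q)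
      - (X 1 * pderiv 1 P) * (X 0 * pderiv 0 Q) := by
    unfold Jac; ring
  rw [← coeff_mul_X M 0, ← coeff_mul_X _ 1, euler, coeff_sub, coeff_mul, coeff_mul,
    ← Finset.sum_sub_distrib]
  refine Finset.sum_congr rfl fun x _ => ?_
  simp only [coeff_X_mul_pderiv, expDet]
  push_cast; ring

theorem pderiv_aeval {σ τ : Type*} [Fintype σ] (g : σ → MvPolynomial τ K)
    (p : MvPolynomial σ K) (i : τ) :
    pderiv i (aeval g p) = ∑ j, aeval g (pderiv j p) * pderiv i (g j) := by
  classical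
  induction p using MvPolynomial.induction_on with
  | C a => simp
  | add p q hp hq => simp only [map_add, hp, hq, add_mul, Finset.sum_add_distrib]
  | mul_X p j hp =>
    simp only [map_mul, map_add, aeval_X, pderiv_mul, hp, pderiv_X, add_mul,
      Finset.sum_add_distrib, Finset.sum_mul, mul_assoc]
    congr 1
    · exact Finset.sum_congr rfl fun k _ => by ring
    · rw [Finset.sum_eq_single j (fun k _ hk => by simp [hk.symm]) (by simp)]
      simp

theorem jac_aeval (g : Fin 2 → MvPolynomial (Fin 2) K)
    (A B : MvPolynomial (Fin 2) K) :
    Jac (aeval g A) (aeval g B) = aeval g (Jac A B) * Jac (g 0) (g 1) := by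
  simp only [Jac, pderiv_aeval, Fin.sum_univ_two, map_sub, map_mul]
  ring

noncomputable def evalAxis : MvPolynomial (Fin 2) K →ₐ[K] Polynomial K :=
  aeval ![Polynomial.X, 0]

theorem coeff_evalAxis (A : MvPolynomial (Fin 2) K) (a : ℕ) :
    (evalAxis A).coeff a = coeff (single 0 a) A := by
  induction A using MvPolynomial.induction_on' with
  | add p q hp hq => simp [hp, hq]
  | monomial n r =>
    rw [evalAxis, aeval_monomial, Finsupp.prod_fintype _ _ (fun _ => pow_zero _),
      Fin.prod_univ_two, coeff_monomial]
    simp only [Matrix.cons_val_zero, Matrix.cons_val_one, Polynomial.algebraMap_eq]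
    rcases Nat.eq_zero_or_pos (n 1) with h | h
    · rw [h, pow_zero, mul_one, Polynomial.coeff_C_mul_X_pow]
      congr 1
      simp [Finsupp.ext_iff, Fin.forall_fin_two, h, eq_comm]
    · rw [zero_pow h.ne', mul_zero, mul_zero, Polynomial.coeff_zero, if_neg]
      rintro rfl
      simp at h

noncomputable def negX1 : MvPolynomial (Fin 2) K →ₐ[K] MvPolynomial (Fin 2) K :=
  aeval ![X 0, -X 1]

theorem coeff_negX1 (A : MvPolynomial (Fin 2) K) (m : Fin 2 →₀ ℕ) :
    coeff m (negX1 A) = (-1) ^ m 1 * coeff m A := by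
  induction A using MvPolynomial.induction_on' with
  | add p q hp hq => simp [hp, hq, mul_add]
  | monomial n a =>
    have : negX1 (monomial n a) = monomial n ((-1) ^ n 1 * a) := by
      rw [negX1, aeval_monomial, Finsupp.prod_fintype _ _ (fun _ => pow_zero _),
        Fin.prod_univ_two, monomial_eq, Finsupp.prod_fintype _ _ (fun _ => pow_zero _),
        Fin.prod_univ_two]
      simp only [Matrix.cons_val_zero, Matrix.cons_val_one, algebraMap_eq]
      rw [neg_pow, C_mul, C_pow, map_neg, C_1]
      ring
    rw [this, coeff_monomial, coeff_monomial]
    split_ifs with h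
    · rw [h]
    · rw [mul_zero]

theorem expDet_mul_coeff_eq_zero_of_snd_eq_zero {P : MvPolynomial (Fin 2) K}
    (hPaxis : ∀ m, m 1 = 0 → 2 ≤ m 0 → coeff m P = 0) {x₁ : Fin 2 →₀ ℕ} (x₂ : Fin 2 →₀ ℕ)
    (hx₁ : x₁ 1 = 0) (hne : x₁ ≠ single 0 1) : (expDet x₁ x₂ : K) * coeff x₁ P = 0 := by
  rcases (by omega : x₁ 0 = 0 ∨ x₁ 0 = 1 ∨ 2 ≤ x₁ 0) with h | h | h
  · simp [expDet, h, hx₁]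
  · exact absurd (Finsupp.ext (Fin.forall_fin_two.2 ⟨by simp [h], by simp [hx₁]⟩)) hne
  · simp [hPaxis x₁ hx₁ h]

-- `m₀` has the steepest slope `(m₀ 0 - 1) / m₀ 1`, so the edge of the Newton polygon of `P` from
-- `(1, 0)` through `m₀` is the top level set of the weight
theorem exists_steepest_mixed_monomial {P : MvPolynomial (Fin 2) K}
    (hPaxis : ∀ m, m 1 = 0 → 2 ≤ m 0 → coeff m P = 0)
    (hbad : ∃ m ∈ P.support, m 0 ≠ 0 ∧ m ≠ single 0 1) :
    ∃ m₀ ∈ P.support, m₀ 0 ≠ 0 ∧ m₀ 1 ≠ 0 ∧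
      ∀ m ∈ P.support, weight ![(m₀ 1 : ℤ), 1 - m₀ 0] m ≤ m₀ 1 := by
  have hmixed : ∀ m ∈ P.support, m 0 ≠ 0 → m ≠ single 0 1 → m 1 ≠ 0 := by
    intro m hm h0 hne h1
    rcases (by omega : m 0 = 1 ∨ 2 ≤ m 0) with h | h
    · exact hne (Finsupp.ext (Fin.forall_fin_two.2 ⟨by simp [h], by simp [h1]⟩))
    · exact mem_support_iff.1 hm (hPaxis m h1 h)
  obtain ⟨m₀, hm₀B, hm₀max⟩ := Finset.exists_max_image
    (P.support.filter fun m => m 0 ≠ 0 ∧ m 1 ≠ 0) (fun m => ((m 0 : ℚ) - 1) / m 1)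
    (by
      obtain ⟨m, hm, h0, hne⟩ := hbad
      exact ⟨m, Finset.mem_filter.2 ⟨hm, h0, hmixed m hm h0 hne⟩⟩)
  obtain ⟨hm₀, hm₀0, hm₀1⟩ := Finset.mem_filter.1 hm₀B
  refine ⟨m₀, hm₀, hm₀0, hm₀1, fun m hm => ?_⟩
  have hm₀0' : (1 : ℤ) ≤ m₀ 0 := by exact_mod_cast Nat.one_le_iff_ne_zero.2 hm₀0
  simp only [weight_fin_two, Matrix.cons_val_zero, Matrix.cons_val_one]
  by_cases h0 : m 0 = 0
  · rw [h0]; push_cast; nlinarith [(m 1).cast_nonneg (α := ℤ)]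
  by_cases hne : m = single 0 1
  · subst hne; simp
  have h1 := hmixed m hm h0 hne
  have hslope := hm₀max m (Finset.mem_filter.2 ⟨hm, h0, h1⟩)
  rw [div_le_div_iff₀ (by positivity) (by positivity)] at hslope
  have : ((m 0 : ℤ) - 1) * m₀ 1 ≤ ((m₀ 0 : ℤ) - 1) * m 1 := by exact_mod_cast hslope
  linarith

theorem exists_max_snd_of_weight_eq (A : MvPolynomial (Fin 2) K) (w : Fin 2 → ℤ) {d : ℤ}
    {m₀ : Fin 2 →₀ ℕ} (hm₀ : m₀ ∈ A.support) (hm₀w : weight w m₀ = d) :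
    ∃ m ∈ A.support, weight w m = d ∧ m₀ 1 ≤ m 1 ∧
      ∀ m' ∈ A.support, weight w m' = d → m' 1 ≤ m 1 := by
  obtain ⟨m, hm, hmax⟩ := Finset.exists_max_image (A.support.filter (weight w · = d)) (· 1)
    ⟨m₀, Finset.mem_filter.2 ⟨hm₀, hm₀w⟩⟩
  obtain ⟨hmA, hmw⟩ := Finset.mem_filter.1 hm
  exact ⟨m, hmA, hmw, hmax m₀ (Finset.mem_filter.2 ⟨hm₀, hm₀w⟩),
    fun m' hm' hm'w => hmax m' (Finset.mem_filter.2 ⟨hm', hm'w⟩)⟩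

end CommRing

section Field

variable [Field K]

theorem bijective_aeval_triangular {a b : K} (ha : a ≠ 0) (hb : b ≠ 0)
    (q : MvPolynomial Unit K) :
    Function.Bijective
      (aeval ![C a * X 0 + rename (fun _ => 1) q, C b * X 1] :
        MvPolynomial (Fin 2) K →ₐ[K] MvPolynomial (Fin 2) K) := by
  set f : MvPolynomial (Fin 2) K →ₐ[K] MvPolynomial (Fin 2) K :=
    aeval ![C a * X 0 + rename (fun _ => 1) q, C b * X 1]
  let g : MvPolynomial (Fin 2) K →ₐ[K] MvPolynomial (Fin 2) K :=
    aeval ![C a⁻¹ * (X 0 - aeval (fun _ => C b⁻¹ * X 1) q), C b⁻¹ * X 1]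
  have hfg : f.comp g = AlgHom.id K _ := by
    ext i : 1
    fin_cases i
    · simp [f, g, rename_eq_aeval, aeval_eq_bind₁, bind₁_bind₁, Function.comp_def, ← mul_assoc,
        ← C_mul, hb, ha]
    · simp [f, g, ← mul_assoc, ← C_mul, hb]
  have hgf : g.comp f = AlgHom.id K _ := by
    ext i : 1
    fin_cases i
    · simp [f, g, rename_eq_aeval, aeval_eq_bind₁, bind₁_bind₁, Function.comp_def, ← mul_assoc,
        ← C_mul, ha]
    · simp [f, g, ← mul_assoc, ← C_mul, hb]
  exact (AlgEquiv.ofAlgHom f g hfg hgf).bijective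

variable [CharZero K] {P Q : MvPolynomial (Fin 2) K} {c : K}

theorem weight_le_of_jac_eq_C (w : Fin 2 → ℤ) (hJ : Jac P Q = C c)
    (hu : coeff (single 0 1) P ≠ 0) (hPaxis : ∀ m, m 1 = 0 → 2 ≤ m 0 → coeff m P = 0)
    (hQ0 : ∀ m, m 1 = 0 → coeff m Q = 0) (hP : ∀ m ∈ P.support, weight w m ≤ w 0) :
    ∀ m ∈ Q.support, weight w m ≤ w 1 := by
  intro m
  induction hk : m 1 using Nat.strong_induction_on generalizing m with
  | _ k IH =>
  intro hm
  by_contra! hlt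
  have hk0 : k ≠ 0 := fun h => mem_support_iff.1 hm (hQ0 m (hk.trans h))
  obtain ⟨M, rfl⟩ : ∃ M, m = M + single 1 1 :=
    ⟨m - single 1 1, (tsub_add_cancel_of_le (single_le_iff.2 (by omega))).symm⟩
  simp only [Finsupp.add_apply, single_eq_same] at hk
  have hM : M ≠ 0 := by rintro rfl; simp [weight_single] at hlt
  -- in the coefficient of `M` in `Jac P Q = C c` only the product of the `u`-term of `P` with
  -- the `m`-term of `Q` survives: the others vanish on the `u`-axis or, by induction, have too
  -- large a weight
  have hcoeff := congrArg (coeff M) hJ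
  rw [coeff_C, if_neg (Ne.symm hM), coeff_jac, Finset.sum_eq_single_of_mem
    (single 0 1, M + single 1 1) (by rw [mem_antidiagonal, add_left_comm, add_assoc])] at hcoeff
  · have hdet : (expDet (single 0 1) (M + single 1 1) : K) = k := by
      simp [expDet, ← hk]
    rw [hdet] at hcoeff
    exact mem_support_iff.1 hm (by simpa [hk0, hu] using hcoeff)
  rintro ⟨x₁, x₂⟩ hx hne
  simp only [mem_antidiagonal] at hx
  by_cases hx₁e : x₁ = single 0 1
  · subst hx₁e
    have : single 0 1 + x₂ = single 0 1 + (M + single 1 1) := by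
      rw [hx, add_left_comm, add_assoc]
    exact absurd (by rw [add_left_cancel this]) hne
  by_cases hx₁ : x₁ 1 = 0
  · rw [expDet_mul_coeff_eq_zero_of_snd_eq_zero hPaxis x₂ hx₁ hx₁e, zero_mul]
  by_cases hp : coeff x₁ P = 0
  · simp [hp]
  by_cases hq : coeff x₂ Q = 0
  · simp [hq]
  exfalso
  have hx1 : x₁ 1 + x₂ 1 = M 1 + 1 := by simpa using congrArg (· 1) hx
  have h₂ := IH (x₂ 1) (by omega) x₂ rfl (mem_support_iff.2 hq)
  have h₁ := hP x₁ (mem_support_iff.2 hp)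
  have hw := congrArg (weight w) hx
  simp only [map_add, weight_single, one_smul] at hw hlt
  linarith

theorem expDet_eq_zero_or_of_extremal (w : Fin 2 → ℤ) (hw : w 0 ≠ 0) (hJ : Jac P Q = C c)
    (hP : ∀ m ∈ P.support, weight w m ≤ w 0) (hQ : ∀ m ∈ Q.support, weight w m ≤ w 1)
    {m₁ m₂ : Fin 2 →₀ ℕ} (hm₁ : m₁ ∈ P.support) (hm₁w : weight w m₁ = w 0)
    (hm₁max : ∀ m ∈ P.support, weight w m = w 0 → m 1 ≤ m₁ 1)
    (hm₂ : m₂ ∈ Q.support) (hm₂w : weight w m₂ = w 1)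
    (hm₂max : ∀ m ∈ Q.support, weight w m = w 1 → m 1 ≤ m₂ 1) :
    expDet m₁ m₂ = 0 ∨ m₁ + m₂ = single 0 1 + single 1 1 := by
  by_contra! ⟨hdet, hne⟩
  obtain ⟨M, hM⟩ := exists_add_single_add_single_eq_of_expDet_ne_zero hdet
  have hM0 : M ≠ 0 := by rintro rfl; exact hne (by rw [← hM, zero_add])
  -- by the weight bounds and the maximality of `m₁ 1` and `m₂ 1`, `(m₁, m₂)` is the only
  -- pair contributing to the coefficient of `M` in `Jac P Q`
  have hcoeff := congrArg (coeff M) hJ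
  rw [coeff_C, if_neg (Ne.symm hM0), coeff_jac, hM,
    Finset.sum_eq_single_of_mem (m₁, m₂) (mem_antidiagonal.2 rfl)] at hcoeff
  · simp [mem_support_iff.1 hm₁, mem_support_iff.1 hm₂, hdet] at hcoeff
  rintro ⟨x₁, x₂⟩ hx hne'
  simp only [mem_antidiagonal] at hx
  by_cases hp : coeff x₁ P = 0
  · simp [hp]
  by_cases hq : coeff x₂ Q = 0
  · simp [hq]
  exfalso
  have hw' := congrArg (weight w) hx
  simp only [map_add] at hw'
  have e₁ : weight w x₁ = w 0 := by
    linarith [hP x₁ (mem_support_iff.2 hp), hQ x₂ (mem_support_iff.2 hq)]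
  have e₂ : weight w x₂ = w 1 := by linarith [hP x₁ (mem_support_iff.2 hp)]
  have hx1 := congrArg (· 1) hx
  simp only [Finsupp.add_apply] at hx1
  have h1 : x₁ 1 = m₁ 1 := by
    linarith [hm₁max x₁ (mem_support_iff.2 hp) e₁, hm₂max x₂ (mem_support_iff.2 hq) e₂]
  have h0 : x₁ 0 = m₁ 0 := by
    have : (x₁ 0 : ℤ) * w 0 = m₁ 0 * w 0 := by
      rw [weight_fin_two, h1] at e₁
      rw [weight_fin_two] at hm₁w
      linarith
    exact_mod_cast mul_right_cancel₀ hw this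
  obtain rfl : x₁ = m₁ := Finsupp.ext (Fin.forall_fin_two.2 ⟨h0, h1⟩)
  exact hne' (Prod.ext rfl (add_left_cancel hx))

theorem coeffs_on_axis_of_jac_eq_C (hJ : Jac P Q = C c) (hc : c ≠ 0)
    (hP1 : ∀ m, m 1 = 1 → coeff m P = 0) :
    coeff (single 0 1) P ≠ 0 ∧ (∀ m, m 1 = 0 → 2 ≤ m 0 → coeff m P = 0) ∧
      coeff (single 1 1) Q ≠ 0 := by
  have hJ' := congrArg evalAxis hJ
  have hv : evalAxis (pderiv 1 P) = 0 := Polynomial.ext fun a => by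
    rw [coeff_evalAxis, coeff_pderiv, hP1 _ (by simp)]; simp
  rw [Jac, map_sub, map_mul, map_mul, hv, zero_mul, sub_zero, ← MvPolynomial.algebraMap_eq,
    AlgHom.commutes, Polynomial.algebraMap_eq] at hJ'
  have hunit : IsUnit (evalAxis (pderiv 0 P) * evalAxis (pderiv 1 Q)) :=
    hJ' ▸ Polynomial.isUnit_C.2 (isUnit_iff_ne_zero.2 hc)
  obtain ⟨a, ha, hPa⟩ := Polynomial.isUnit_iff.1 (isUnit_of_mul_isUnit_left hunit)
  obtain ⟨b, hb, hQb⟩ := Polynomial.isUnit_iff.1 (isUnit_of_mul_isUnit_right hunit)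
  have hP' (n : ℕ) := congrArg (Polynomial.coeff · n) hPa
  have hQ' := congrArg (Polynomial.coeff · 0) hQb
  simp only [Polynomial.coeff_C, coeff_evalAxis, coeff_pderiv] at hP' hQ'
  refine ⟨?_, fun m hm1 hm0 => ?_, ?_⟩
  · have h : coeff (single 0 1) P = a := by simpa using (hP' 0).symm
    exact h ▸ ha.ne_zero
  · have hm : single 0 (m 0 - 1) + single 0 1 = m :=
      Finsupp.ext (Fin.forall_fin_two.2 ⟨by simpa using Nat.sub_add_cancel (by omega : 1 ≤ m 0),
        by simp [hm1]⟩)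
    have := hP' (m 0 - 1)
    rw [if_neg (by omega), hm] at this
    exact (mul_eq_zero.1 this.symm).resolve_right (by norm_cast)
  · have h : coeff (single 1 1) Q = b := by simpa using hQ'.symm
    exact h ▸ hb.ne_zero

theorem linear_in_X0_of_jac_eq_C (hJ : Jac P Q = C c) (hc : c ≠ 0)
    (hP1 : ∀ m, m 1 = 1 → coeff m P = 0) (hQ0 : ∀ m, m 1 = 0 → coeff m Q = 0) :
    ∀ m ∈ P.support, m 0 = 0 ∨ m = single 0 1 := by
  obtain ⟨hu, hPaxis, hv⟩ := coeffs_on_axis_of_jac_eq_C hJ hc hP1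
  by_contra! hbad
  obtain ⟨m₀, hm₀, hm₀0, hm₀1, hPw⟩ := exists_steepest_mixed_monomial hPaxis hbad
  set w : Fin 2 → ℤ := ![m₀ 1, 1 - m₀ 0] with hw
  have hQw := weight_le_of_jac_eq_C w hJ hu hPaxis hQ0 hPw
  obtain ⟨m₁, hm₁, hm₁w, hm₀₁, hm₁max⟩ :=
    exists_max_snd_of_weight_eq P w hm₀ (d := w 0)
      (by simp only [weight_fin_two, hw, Matrix.cons_val_zero, Matrix.cons_val_one]; ring)
  obtain ⟨m₂, hm₂, hm₂w, -, hm₂max⟩ :=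
    exists_max_snd_of_weight_eq Q w (mem_support_iff.2 hv) (d := w 1) (by simp [weight_fin_two, hw])
  have hm₂1 : m₂ 1 ≠ 0 := fun h => mem_support_iff.1 hm₂ (hQ0 _ h)
  rcases expDet_eq_zero_or_of_extremal w (by simp [hw, hm₀1]) hJ hPw hQw hm₁ hm₁w hm₁max
    hm₂ hm₂w hm₂max with h | h
  · simp only [weight_fin_two, hw, Matrix.cons_val_zero, Matrix.cons_val_one] at hm₁w hm₂w
    have key : (m₀ 1 : ℤ) * expDet m₁ m₂ = m₀ 1 * m₂ 1 + m₁ 1 * (m₀ 0 - 1) := by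
      unfold expDet; linear_combination (m₂ 1 : ℤ) * hm₁w - (m₁ 1 : ℤ) * hm₂w
    rw [h, mul_zero] at key
    have : 0 < (m₀ 1 : ℤ) * m₂ 1 := by positivity
    have : (1 : ℤ) ≤ m₀ 0 := by exact_mod_cast Nat.one_le_iff_ne_zero.2 hm₀0
    nlinarith [mul_nonneg (m₁ 1).cast_nonneg (sub_nonneg.2 this)]
  · have : m₁ 1 + m₂ 1 = 1 := by simpa using congrArg (· 1) h
    omega

theorem eq_monomial_X1_of_jac_eq_C (hJ : Jac P Q = C c) (hc : c ≠ 0)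
    (hP1 : ∀ m, m 1 = 1 → coeff m P = 0) (hQ0 : ∀ m, m 1 = 0 → coeff m Q = 0)
    (hP : ∀ m ∈ P.support, m 0 = 0 ∨ m = single 0 1) :
    Q = monomial (single 1 1) (coeff (single 1 1) Q) := by
  obtain ⟨hu, hPaxis, -⟩ := coeffs_on_axis_of_jac_eq_C hJ hc hP1
  set w : Fin 2 → ℤ := ![1, 0] with hw
  have hPw : ∀ m ∈ P.support, weight w m ≤ w 0 := by
    intro m hm
    rcases hP m hm with h | rfl
    · simp [weight_fin_two, hw, h]
    · simp [weight_fin_two, hw]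
  have hQw := weight_le_of_jac_eq_C w hJ hu hPaxis hQ0 hPw
  ext m
  rw [coeff_monomial]
  split_ifs with hm1
  · rw [hm1]
  by_contra hm
  have hm : m ∈ Q.support := mem_support_iff.2 hm
  obtain ⟨m₂, hm₂, hm₂w, hmm₂, hm₂max⟩ := exists_max_snd_of_weight_eq Q w hm (d := 0)
    (le_antisymm (hQw m hm) (by simp [weight_fin_two, hw]))
  have hu_max : ∀ m ∈ P.support, weight w m = w 0 → m 1 ≤ (single 0 1 : Fin 2 →₀ ℕ) 1 := by
    intro m hm' hmw
    rcases hP m hm' with h | rfl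
    · simp [weight_fin_two, hw, h] at hmw
    · rfl
  rcases expDet_eq_zero_or_of_extremal w (by simp [hw]) hJ hPw hQw (mem_support_iff.2 hu)
    (by simp [weight_fin_two, hw]) hu_max hm₂ hm₂w hm₂max with h | h
  · exact mem_support_iff.1 hm₂ (hQ0 _ (by simpa [expDet] using h))
  · obtain rfl := add_left_cancel h
    have h0 : m 0 = 0 := by simpa [weight_fin_two, hw] using hQw m hm
    have h1 : m 1 = 1 := by
      have : m 1 ≠ 0 := fun h => mem_support_iff.1 hm (hQ0 _ h)
      have : m 1 ≤ 1 := by simpa using hmm₂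
      omega
    exact hm1 (Finsupp.ext (Fin.forall_fin_two.2 ⟨by simp [h0], by simp [h1]⟩))

theorem bijective_aeval_of_jac_eq_C_of_negX1 (hJ : Jac P Q = C c) (hc : c ≠ 0) (hP : negX1 P = P)
    (hQ : negX1 Q = -Q) :
    Function.Bijective (aeval ![P, Q] : MvPolynomial (Fin 2) K →ₐ[K] MvPolynomial (Fin 2) K) := by
  have hP1 : ∀ m, m 1 = 1 → coeff m P = 0 := fun m hm => by
    simpa [hP, hm, CharZero.eq_neg_self_iff] using coeff_negX1 P m
  have hQ0 : ∀ m, m 1 = 0 → coeff m Q = 0 := fun m hm => by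
    simpa [hQ, hm, CharZero.neg_eq_self_iff] using coeff_negX1 Q m
  have hPlin := linear_in_X0_of_jac_eq_C hJ hc hP1 hQ0
  obtain ⟨hu, -, hv⟩ := coeffs_on_axis_of_jac_eq_C hJ hc hP1
  obtain ⟨q, hq⟩ := exists_rename_eq_of_vars_subset_range
    (P - C (coeff (single 0 1) P) * X 0) (fun _ : Unit => (1 : Fin 2))
    (Function.injective_of_subsingleton _) (by
      intro i hi
      fin_cases i
      · exfalso
        obtain ⟨d, hd, hd0⟩ := (mem_vars_iff_mem_support _).1 hi
        rw [mem_support_iff, coeff_sub, C_mul_X_eq_monomial, coeff_monomial] at hd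
        split_ifs at hd with h
        · exact hd (by rw [h, sub_self])
        · rcases hPlin d (mem_support_iff.2 (by simpa using hd)) with h0 | h0
          · exact Finsupp.mem_support_iff.1 hd0 h0
          · exact h h0.symm
      · exact ⟨(), rfl⟩)
  have hPQ : ![P, Q] = ![C (coeff (single 0 1) P) * X 0 + rename (fun _ => 1) q,
      C (coeff (single 1 1) Q) * X 1] := by
    funext i
    fin_cases i
    · simp [hq]
    · simpa [C_mul_X_eq_monomial] using eq_monomial_X1_of_jac_eq_C hJ hc hP1 hQ0 hPlin
  rw [hPQ]
  exact bijective_aeval_triangular hu hv q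

theorem C_two_inv_mul_two : (C (2⁻¹ : K) : MvPolynomial (Fin 2) K) * 2 = 1 := by
  rw [← map_ofNat C 2, ← C_mul, inv_mul_cancel₀ two_ne_zero, C_1]

noncomputable def sumDiff : MvPolynomial (Fin 2) K ≃ₐ[K] MvPolynomial (Fin 2) K :=
  AlgEquiv.ofAlgHom (aeval ![X 0 + X 1, X 0 - X 1])
    (aeval ![C 2⁻¹ * (X 0 + X 1), C 2⁻¹ * (X 0 - X 1)])
    (by
      ext i : 1
      fin_cases i <;>
        simp only [Fin.zero_eta, Fin.mk_one, AlgHom.comp_apply, aeval_X, AlgHom.id_apply,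
          Matrix.cons_val_zero, Matrix.cons_val_one, Matrix.cons_val_fin_one, map_mul, map_add,
          map_sub, aeval_C, algebraMap_eq]
      · linear_combination X 0 * C_two_inv_mul_two (K := K)
      · linear_combination X 1 * C_two_inv_mul_two (K := K))
    (by
      ext i : 1
      fin_cases i <;>
        simp only [Fin.zero_eta, Fin.mk_one, AlgHom.comp_apply, aeval_X, AlgHom.id_apply,
          Matrix.cons_val_zero, Matrix.cons_val_one, Matrix.cons_val_fin_one, map_add, map_sub]
      · linear_combination X 0 * C_two_inv_mul_two (K := K)
      · linear_combination X 1 * C_two_inv_mul_two (K := K))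

theorem sumDiff_apply (p : MvPolynomial (Fin 2) K) :
    sumDiff p = aeval ![X 0 + X 1, X 0 - X 1] p := rfl

theorem negX1_sumDiff (p : MvPolynomial (Fin 2) K) : negX1 (sumDiff p) = sumDiff (exch K p) := by
  have : negX1.comp (sumDiff : MvPolynomial (Fin 2) K ≃ₐ[K] _).toAlgHom =
      (sumDiff : MvPolynomial (Fin 2) K ≃ₐ[K] _).toAlgHom.comp (exch K).toAlgHom := by
    ext i : 1
    fin_cases i <;> simp [negX1, sumDiff_apply, exch, sub_eq_add_neg]
  exact AlgHom.congr_fun this p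

theorem jac_sumDiff (A B : MvPolynomial (Fin 2) K) :
    Jac (sumDiff A) (sumDiff B) = sumDiff (Jac A B) * (-2) := by
  rw [sumDiff_apply, sumDiff_apply, sumDiff_apply, jac_aeval]
  congr 1
  norm_num [Jac, pderiv_X]

end Field

end SymmetricKeller

/-- If `Jac(P,Q)` is a nonzero scalar, `P` is `α`-symmetric and `Q` is
`α`-skew-symmetric, then `f` is an automorphism. -/
theorem stmt15 {K : Type*} [Field K] [CharZero K]
    (f : MvPolynomial (Fin 2) K →ₐ[K] MvPolynomial (Fin 2) K)
    (hJac : ∃ c : K, c ≠ 0 ∧ Jac (f (X 0)) (f (X 1)) = C c)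
    (hP : exch K (f (X 0)) = f (X 0))
    (hQ : exch K (f (X 1)) = - f (X 1)) :
    Function.Bijective f := by
  open SymmetricKeller in
  obtain ⟨c, hc, hJ⟩ := hJac
  have hcomp : sumDiff.toAlgHom.comp f = aeval ![sumDiff (f (X 0)), sumDiff (f (X 1))] := by
    ext i : 1
    fin_cases i <;> simp
  have hbij : Function.Bijective (sumDiff.toAlgHom.comp f) := by
    rw [hcomp]
    refine bijective_aeval_of_jac_eq_C_of_negX1 (c := -2 * c) ?_ (by simp [hc]) ?_ ?_
    · rw [jac_sumDiff, hJ, sumDiff_apply, aeval_C, algebraMap_eq, C_mul, map_neg, map_ofNat,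
        mul_comm]
    · rw [negX1_sumDiff, hP]
    · rw [negX1_sumDiff, hQ, map_neg]
  exact (sumDiff.bijective.of_comp_iff' f).1 hbij
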